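/- Let H be a finite-dimensional complex inner product space with orthonormal basis (e_j)_{j=1}^n, ρ_1 > ρ_2 > ... > ρ_n > 0 distinct, D e_j = ρ_j e_j, and A nonnegative self-adjoint. If U_0 is a unitary minimizer of U ↦ trace(D U† A U), and λ_j := ⟨A U_0 e_j, U_0 e_j⟩, then the eigenvalues λ_j are in nondecreasing order: λ_1 ≤ λ_2 ≤ ... ≤ λ_n. -/

import Mathlib

/-!
In the basis `e` the objective is `Re tr(D U† A U) = ∑ₖ ρₖ Re ⟪A U eₖ, U eₖ⟫`. Precomposing the
minimizer `U₀` with the unitary that swaps `e i` and `e j` only exchanges `λ i` and `λ j` in it,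
changing it by `(ρ i - ρ j) (λ j - λ i)`. Minimality makes this nonnegative,
and `ρ i > ρ j` for `i < j` then forces `λ i ≤ λ j`.
-/

open LinearMap InnerProductSpace

section SwapRearrangement

variable {ι R : Type*} [Fintype ι] [DecidableEq ι] [CommRing R]

theorem sum_mul_comp_swap_sub_sum_mul (f g : ι → R) {i j : ι} (hij : i ≠ j) :
    ∑ k, f k * g (Equiv.swap i j k) - ∑ k, f k * g k = (f i - f j) * (g j - g i) := by
  rw [← Finset.sum_sub_distrib, Fintype.sum_eq_add i j hij]
  · simp only [Equiv.swap_apply_left, Equiv.swap_apply_right]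
    ring
  · rintro k ⟨hki, hkj⟩
    rw [Equiv.swap_apply_of_ne_of_ne hki hkj, sub_self]

theorem monotone_of_sum_mul_le_sum_mul_comp_swap [LinearOrder ι] [LinearOrder R]
    [IsStrictOrderedRing R] {ρ g : ι → R} (hρ : StrictAnti ρ)
    (h : ∀ i j, ∑ k, ρ k * g k ≤ ∑ k, ρ k * g (Equiv.swap i j k)) : Monotone g := by
  intro i j hij
  rcases hij.eq_or_lt with rfl | hlt
  · exact le_rfl
  have hswap : 0 ≤ (ρ i - ρ j) * (g j - g i) := by
    rw [← sum_mul_comp_swap_sub_sum_mul ρ g hlt.ne]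
    exact sub_nonneg.mpr (h i j)
  exact sub_nonneg.mp (nonneg_of_mul_nonneg_right hswap (sub_pos.mpr (hρ hlt)))

end SwapRearrangement

section TraceFormula

variable {𝕜 H ι : Type*} [RCLike 𝕜] [NormedAddCommGroup H] [InnerProductSpace 𝕜 H]
  [FiniteDimensional 𝕜 H] [Fintype ι]

theorem LinearIsometryEquiv.toLinearMap_mem_unitary (V : H ≃ₗᵢ[𝕜] H) :
    V.toLinearMap ∈ unitary (H →ₗ[𝕜] H) := by
  rw [Unitary.mem_iff, star_eq_adjoint, V.adjoint_toLinearMap_eq_symm]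
  constructor <;> ext <;> simp

theorem re_trace_comp_adjoint_comp_comp (e : OrthonormalBasis ι 𝕜 H) (ρ : ι → ℝ)
    {D : H →ₗ[𝕜] H} (hD : ∀ j, D (e j) = (ρ j : 𝕜) • e j) (A U : H →ₗ[𝕜] H) :
    RCLike.re (trace 𝕜 H (D ∘ₗ adjoint U ∘ₗ A ∘ₗ U)) =
      ∑ k, ρ k * RCLike.re ⟪A (U (e k)), U (e k)⟫_𝕜 := by
  rw [← Module.End.mul_eq_comp, trace_mul_comm, trace_eq_sum_inner _ e, map_sum]
  refine Fintype.sum_congr _ _ fun k => ?_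
  rw [Module.End.mul_apply, hD, map_smul, comp_apply, comp_apply, inner_smul_right,
    adjoint_inner_right, RCLike.re_ofReal_mul, inner_re_symm]

end TraceFormula

theorem stmt_3_general {H : Type*} [NormedAddCommGroup H] [InnerProductSpace ℂ H]
    [FiniteDimensional ℂ H] {n : ℕ}
    (e : OrthonormalBasis (Fin n) ℂ H) (ρ : Fin n → ℝ)
    (hanti : StrictAnti ρ)
    (D A : H →ₗ[ℂ] H)
    (hD : ∀ j, D (e j) = (ρ j : ℂ) • e j)
    (U₀ : H →ₗ[ℂ] H)
    (hU₀ : LinearMap.adjoint U₀ ∘ₗ U₀ = LinearMap.id ∧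
      U₀ ∘ₗ LinearMap.adjoint U₀ = LinearMap.id)
    (hmin : ∀ U : H →ₗ[ℂ] H,
      (LinearMap.adjoint U ∘ₗ U = LinearMap.id ∧ U ∘ₗ LinearMap.adjoint U = LinearMap.id) →
      (LinearMap.trace ℂ H (D ∘ₗ LinearMap.adjoint U₀ ∘ₗ A ∘ₗ U₀)).re ≤
        (LinearMap.trace ℂ H (D ∘ₗ LinearMap.adjoint U ∘ₗ A ∘ₗ U)).re)
    (lam : Fin n → ℝ)
    (hlam : ∀ j, lam j = (inner ℂ (A (U₀ (e j))) (U₀ (e j)) : ℂ).re) :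
    Monotone lam := by
  refine monotone_of_sum_mul_le_sum_mul_comp_swap hanti fun i j => ?_
  let U := U₀ * (e.equiv e (Equiv.swap i j)).toLinearMap
  -- `star` is `adjoint` and `*` is `∘ₗ` on `Module.End`, so `hU₀` is unitarity by definition.
  have hU : U ∈ unitary (H →ₗ[ℂ] H) :=
    mul_mem (show U₀ ∈ unitary (H →ₗ[ℂ] H) from hU₀)
      (LinearIsometryEquiv.toLinearMap_mem_unitary _)
  have key := hmin U hU
  rw [← RCLike.re_to_complex, ← RCLike.re_to_complex, re_trace_comp_adjoint_comp_comp e ρ hD,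
    re_trace_comp_adjoint_comp_comp e ρ hD] at key
  simpa [U, hlam, OrthonormalBasis.equiv_apply_basis] using key

theorem stmt_3 {H : Type*} [NormedAddCommGroup H] [InnerProductSpace ℂ H]
    [FiniteDimensional ℂ H] {n : ℕ}
    (e : OrthonormalBasis (Fin n) ℂ H) (ρ : Fin n → ℝ)
    (hpos : ∀ j, 0 < ρ j) (hanti : StrictAnti ρ)
    (D A : H →ₗ[ℂ] H)
    (hD : ∀ j, D (e j) = (ρ j : ℂ) • e j)
    (hA : LinearMap.adjoint A = A)
    (hApos : ∀ x : H, 0 ≤ (inner ℂ (A x) x : ℂ).re)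
    (U₀ : H →ₗ[ℂ] H)
    (hU₀ : LinearMap.adjoint U₀ ∘ₗ U₀ = LinearMap.id ∧
      U₀ ∘ₗ LinearMap.adjoint U₀ = LinearMap.id)
    (hmin : ∀ U : H →ₗ[ℂ] H,
      (LinearMap.adjoint U ∘ₗ U = LinearMap.id ∧ U ∘ₗ LinearMap.adjoint U = LinearMap.id) →
      (LinearMap.trace ℂ H (D ∘ₗ LinearMap.adjoint U₀ ∘ₗ A ∘ₗ U₀)).re ≤
        (LinearMap.trace ℂ H (D ∘ₗ LinearMap.adjoint U ∘ₗ A ∘ₗ U)).re)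
    (lam : Fin n → ℝ)
    (hlam : ∀ j, lam j = (inner ℂ (A (U₀ (e j))) (U₀ (e j)) : ℂ).re) :
    Monotone lam :=
  stmt_3_general e ρ hanti D A hD U₀ hU₀ hmin lam hlam
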